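/- Let B be a unital C*-algebra, X ⊆ B a complex linear subspace, and v ∈ X with ‖v‖ ≤ 1. Suppose that for every x ∈ X with ‖x‖ ≤ 1 the 2×2 matrix !![v, x; 0, v] over B has norm at least √(1 + ‖x‖). Then ‖(star v) * x‖ = ‖x‖ and ‖x * (star v)‖ = ‖x‖ for every x ∈ X. -/

import Mathlib

/-!
Write `N = !![v, y; 0, v]`. Expanding `⟪N u, N u⟫` in the Hilbert C*-module `B²`, the diagonal
terms are bounded by `‖v‖² + ‖y‖²` and the cross term `u₀ (y v*) u₁* + h.c.` by `‖y v*‖`, using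
positivity of `(u₀ c - ‖c‖ u₁)(u₀ c - ‖c‖ u₁)*`; the same argument for `N*`, conjugated by the
coordinate swap, gives `‖v* y‖`. Hence `1 + ‖y‖ ≤ ‖N‖² ≤ 1 + ‖y‖² + ‖v* y‖`. Taking `y = s x`
and dividing by `s` gives `‖x‖ - s ‖x‖² ≤ ‖v* x‖` for all small `s > 0`, and `s → 0` yields
`‖x‖ ≤ ‖v* x‖`; the reverse inequality is `‖v‖ ≤ 1`.
-/

/-- The canonical C*-matrix norm on matrices over a C*-algebra `A`, obtained by viewing an
`m × n` matrix as an operator between the Hilbert C*-modules `A^n` and `A^m` (as in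
Mathlib's `CStarMatrix`).  For square matrices this is the unique C*-algebra norm. -/
noncomputable def cstarMatrixNorm {A : Type*} [NonUnitalNormedRing A] [StarRing A]
    {m n : ℕ} (M : Matrix (Fin m) (Fin n) A) : ℝ :=
  sSup {r : ℝ | ∃ v : Fin n → A, ‖∑ i, star (v i) * v i‖ ≤ 1 ∧
    r = Real.sqrt ‖∑ j, star (M.mulVec v j) * M.mulVec v j‖}

open Filter Topology CStarModule WithCStarModule CStarMatrix
open scoped Matrix InnerProductSpace

theorem le_of_forall_mul_le_sq_add {a b : ℝ}
    (h : ∀ s > 0, s * a ≤ 1 → s * a ≤ (s * a) ^ 2 + s * b) : a ≤ b := by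
  have hlim : Tendsto (fun s : ℝ => s * a ^ 2 + b) (𝓝[>] 0) (𝓝 b) := by
    have : Continuous fun s : ℝ => s * a ^ 2 + b := by fun_prop
    simpa using (this.tendsto 0).mono_left nhdsWithin_le_nhds
  have hsmall : ∀ᶠ s in 𝓝[>] (0 : ℝ), s * a < 1 := by
    have : Continuous fun s : ℝ => s * a := by fun_prop
    exact ((this.tendsto 0).mono_left nhdsWithin_le_nhds).eventually (gt_mem_nhds (by simp))
  refine ge_of_tendsto hlim ?_
  filter_upwards [self_mem_nhdsWithin, hsmall] with s (hs : 0 < s) hsa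
  refine le_of_mul_le_mul_left ?_ hs
  linear_combination h s hs hsa.le

theorem toCLM_ofMatrix_conjTranspose {A : Type*} [NonUnitalCStarAlgebra A] {m n : ℕ}
    (M : Matrix (Fin m) (Fin n) A) (w : Fin n → A) :
    toCLM (ofMatrix Mᴴ) ((equiv A (Fin n → A)).symm (star w)) =
      (equiv A (Fin m → A)).symm (star (M *ᵥ w)) := by
  ext j
  simp [toCLM_apply_eq_sum, Matrix.mulVec, dotProduct, star_sum, ofMatrix_apply]

section Order

variable {A : Type*} [NonUnitalCStarAlgebra A] [PartialOrder A] [StarOrderedRing A]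

theorem star_right_conjugate_mul_star_le_norm_sq_smul (x a : A) :
    x * (a * star a) * star x ≤ ‖a‖ ^ 2 • (x * star x) := by
  simpa [CStarRing.norm_self_mul_star, sq] using
    CStarAlgebra.star_right_conjugate_le_norm_smul (a := x) (b := a * star a)

theorem mul_mul_star_add_le_norm_smul (x y c : A) :
    x * c * star y + y * star c * star x ≤ ‖c‖ • (x * star x + y * star y) := by
  obtain rfl | hc := eq_or_ne c 0
  · simp
  set s := ‖c‖
  have hs : 0 < s := norm_pos_iff.mpr hc
  have hsq : 0 ≤ (x * c - s • y) * star (x * c - s • y) := mul_star_self_nonneg _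
  have hexp : (x * c - s • y) * star (x * c - s • y) = x * (c * star c) * star x
      + (s * s) • (y * star y) - s • (x * c * star y + y * star c * star x) := by
    simp only [star_sub, star_smul, star_mul, star_trivial, sub_mul, mul_sub, smul_mul_assoc,
      mul_smul_comm, smul_sub, smul_smul, smul_add, mul_assoc]
    abel
  rw [hexp, sub_nonneg] at hsq
  rw [← smul_le_smul_iff_of_pos_left hs, smul_smul]
  calc s • (x * c * star y + y * star c * star x)
      ≤ x * (c * star c) * star x + (s * s) • (y * star y) := hsq
    _ ≤ (s * s) • (x * star x) + (s * s) • (y * star y) := by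
      have := star_right_conjugate_mul_star_le_norm_sq_smul x c
      rw [sq] at this
      gcongr
    _ = (s * s) • (x * star x + y * star y) := (smul_add _ _ _).symm

theorem toeplitz_inner_self_le (u₀ u₁ a b : A) :
    u₀ * a * star (u₀ * a) + (u₀ * b + u₁ * a) * star (u₀ * b + u₁ * a)
      ≤ (‖a‖ ^ 2 + ‖b‖ ^ 2 + ‖b * star a‖) • (u₀ * star u₀ + u₁ * star u₁) := by
  have hexp : u₀ * a * star (u₀ * a) + (u₀ * b + u₁ * a) * star (u₀ * b + u₁ * a)
      = (u₀ * (a * star a) * star u₀ + u₁ * (a * star a) * star u₁)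
        + u₀ * (b * star b) * star u₀
        + (u₀ * (b * star a) * star u₁ + u₁ * star (b * star a) * star u₀) := by
    simp only [star_add, star_mul, star_star, add_mul, mul_add, mul_assoc]
    abel
  have h₁ : 0 ≤ u₁ * star u₁ := mul_star_self_nonneg u₁
  rw [hexp, add_smul, add_smul]
  gcongr
  · rw [smul_add]
    exact add_le_add (star_right_conjugate_mul_star_le_norm_sq_smul u₀ a)
      (star_right_conjugate_mul_star_le_norm_sq_smul u₁ a)
  · refine (star_right_conjugate_mul_star_le_norm_sq_smul u₀ b).trans ?_
    gcongr
    exact le_add_of_nonneg_right h₁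
  · exact mul_mul_star_add_le_norm_smul u₀ u₁ _

theorem norm_symm_equiv_star {n : ℕ} (w : Fin n → A) :
    ‖(equiv A (Fin n → A)).symm (star w)‖ = √‖∑ i, star (w i) * w i‖ := by
  simp [pi_norm, inner_def]

/-- Mathlib's `CStarMatrix` acts on row vectors with the inner product `⟪x, y⟫ = y * star x`;
conjugating the vectors turns this into the column-vector convention of `cstarMatrixNorm`. -/
theorem cstarMatrixNorm_eq_norm_ofMatrix_conjTranspose {m n : ℕ}
    (M : Matrix (Fin m) (Fin n) A) : cstarMatrixNorm M = ‖ofMatrix Mᴴ‖ := by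
  rw [norm_def, ← ContinuousLinearMap.sSup_unitClosedBall_eq_norm, cstarMatrixNorm]
  congr 1
  ext r
  constructor
  · rintro ⟨w, hw, rfl⟩
    refine ⟨(equiv A _).symm (star w), ?_, ?_⟩
    · simpa [norm_symm_equiv_star] using hw
    · simp only [toCLM_ofMatrix_conjTranspose, norm_symm_equiv_star]
  · rintro ⟨u, hu, rfl⟩
    obtain ⟨w, rfl⟩ : ∃ w, (equiv A (Fin n → A)).symm (star w) = u :=
      ⟨star (equiv A _ u), by simp⟩
    refine ⟨w, ?_, ?_⟩
    · simpa [norm_symm_equiv_star] using hu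
    · simp only [toCLM_ofMatrix_conjTranspose, norm_symm_equiv_star]

theorem cstarMatrixNorm_eq_norm_ofMatrix {n : ℕ} (M : Matrix (Fin n) (Fin n) A) :
    cstarMatrixNorm M = ‖ofMatrix M‖ :=
  (cstarMatrixNorm_eq_norm_ofMatrix_conjTranspose M).trans (norm_star (ofMatrix M))

theorem CStarMatrix.norm_le_sqrt_of_inner_le {m n : Type*} [Fintype m] [Fintype n]
    {N : CStarMatrix m n A} {c : ℝ} (hc : 0 ≤ c)
    (h : ∀ u, ⟪toCLM N u, toCLM N u⟫_A ≤ c • ⟪u, u⟫_A) : ‖N‖ ≤ √c := by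
  refine (toCLM N).opNorm_le_bound (Real.sqrt_nonneg c) fun u => ?_
  rw [← sq_le_sq₀ (norm_nonneg _) (by positivity), mul_pow, Real.sq_sqrt hc, norm_sq_eq A,
    norm_sq_eq A, ← Real.norm_of_nonneg hc, ← norm_smul]
  exact CStarAlgebra.norm_le_norm_of_nonneg_of_le inner_self_nonneg (h u)

theorem sq_norm_ofMatrix_toeplitz_le_mul_star (a b : A) :
    ‖ofMatrix !![a, b; 0, a]‖ ^ 2 ≤ ‖a‖ ^ 2 + ‖b‖ ^ 2 + ‖b * star a‖ := by
  have hc : 0 ≤ ‖a‖ ^ 2 + ‖b‖ ^ 2 + ‖b * star a‖ := by positivity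
  refine (Real.le_sqrt (norm_nonneg _) hc).mp (norm_le_sqrt_of_inner_le hc fun u => ?_)
  simpa [pi_inner, inner_def, toCLM_apply_eq_sum, Fin.sum_univ_two] using
    toeplitz_inner_self_le (u 0) (u 1) a b

theorem sq_norm_ofMatrix_toeplitz_le_star_mul (a b : A) :
    ‖ofMatrix !![a, b; 0, a]‖ ^ 2 ≤ ‖a‖ ^ 2 + ‖b‖ ^ 2 + ‖star a * b‖ := by
  have hswap : reindexₐ ℂ A (Equiv.swap 0 1) (star (ofMatrix !![a, b; 0, a]))
      = ofMatrix !![star a, star b; 0, star a] := by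
    ext i j
    change star (!![a, b; 0, a] (Equiv.swap 0 1 j) (Equiv.swap 0 1 i))
      = !![star a, star b; 0, star a] i j
    fin_cases i <;> fin_cases j <;> simp
  have := sq_norm_ofMatrix_toeplitz_le_mul_star (star a) (star b)
  rwa [← hswap, StarAlgEquiv.norm_map, norm_star, norm_star, norm_star, star_star,
    ← star_star (star b * a), norm_star, star_mul, star_star] at this

end Order

theorem norm_le_sq_add_of_sqrt_le_cstarMatrixNorm {A : Type*} [NonUnitalCStarAlgebra A]
    {v y : A} (hv : ‖v‖ ≤ 1) (h : √(1 + ‖y‖) ≤ cstarMatrixNorm !![v, y; 0, v]) :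
    ‖y‖ ≤ ‖y‖ ^ 2 + ‖star v * y‖ ∧ ‖y‖ ≤ ‖y‖ ^ 2 + ‖y * star v‖ := by
  let _ := CStarAlgebra.spectralOrder A
  have _ := CStarAlgebra.spectralOrderedRing A
  rw [cstarMatrixNorm_eq_norm_ofMatrix, Real.sqrt_le_left (norm_nonneg _)] at h
  have hv2 : ‖v‖ ^ 2 ≤ 1 := pow_le_one₀ (norm_nonneg v) hv
  exact ⟨by linarith [sq_norm_ofMatrix_toeplitz_le_star_mul v y],
    by linarith [sq_norm_ofMatrix_toeplitz_le_mul_star v y]⟩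

theorem star_v_isometric {B : Type*} [CStarAlgebra B]
    (X : Submodule ℂ B) (v : B) (hv1 : ‖v‖ ≤ 1)
    (h : ∀ x ∈ X, ‖x‖ ≤ 1 → Real.sqrt (1 + ‖x‖) ≤ cstarMatrixNorm !![v, x; 0, v]) :
    ∀ x ∈ X, ‖star v * x‖ = ‖x‖ ∧ ‖x * star v‖ = ‖x‖ := by
  intro x hx
  have hscaled : ∀ s > 0, s * ‖x‖ ≤ 1 →
      s * ‖x‖ ≤ (s * ‖x‖) ^ 2 + s * ‖star v * x‖ ∧
        s * ‖x‖ ≤ (s * ‖x‖) ^ 2 + s * ‖x * star v‖ := by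
    intro s hs hsx
    have hnorm : ‖s • x‖ = s * ‖x‖ := by rw [norm_smul, Real.norm_of_nonneg hs.le]
    have hmem : s • x ∈ X := Complex.coe_smul s x ▸ X.smul_mem (s : ℂ) hx
    simpa only [hnorm, mul_smul_comm, smul_mul_assoc, norm_smul, Real.norm_of_nonneg hs.le]
      using norm_le_sq_add_of_sqrt_le_cstarMatrixNorm hv1 (h _ hmem (hnorm ▸ hsx))
  have hstar : ‖star v‖ ≤ 1 := (norm_star v).trans_le hv1
  exact ⟨le_antisymm ((norm_mul_le _ _).trans (mul_le_of_le_one_left (norm_nonneg x) hstar))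
      (le_of_forall_mul_le_sq_add fun s hs hsx => (hscaled s hs hsx).1),
    le_antisymm ((norm_mul_le _ _).trans (mul_le_of_le_one_right (norm_nonneg x) hstar))
      (le_of_forall_mul_le_sq_add fun s hs hsx => (hscaled s hs hsx).2)⟩
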